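/- arXiv:1910.06430 — 3 statements merged into one kernel-verified Lean document; each statement's English description precedes it below -/
import Mathlib

section
/- For the weak Riemannian metric g_p(v,w) = e^{−‖p‖²} B(v,w) on ℓ², the length of the segment β_n(t) = p + n e_n + t(q − p), t ∈ [0,1], satisfies L_g(β_n) ≤ √(B(q−p, q−p)) · e^{−n²/2 + n(‖p‖ + ‖q−p‖)}, for all p, q ∈ ℓ² and positive integers n. -/
noncomputable section
open scoped RealInnerProductSpace ENNReal

abbrev H : Type := lp (fun _ : ℕ+ => ℝ) 2

lemma memA (x : H) : Memℓp (fun k : ℕ+ => x k / (k : ℝ)^4) 2 := by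
  apply memℓp_gen
  have hx : Summable fun k : ℕ+ => ‖x k‖ ^ (2 : ℝ≥0∞).toReal :=
    (lp.memℓp x).summable (by norm_num)
  refine hx.of_nonneg_of_le (fun k => by positivity) (fun k => ?_)
  have h1 : (1:ℝ) ≤ (k : ℝ)^4 := one_le_pow₀ (by exact_mod_cast k.one_le)
  have : ‖x k / (k : ℝ)^4‖ ≤ ‖x k‖ := by
    rw [norm_div]
    exact div_le_self (norm_nonneg _) (by simpa using h1)
  exact Real.rpow_le_rpow (norm_nonneg _) this (by norm_num)

def A (x : H) : H := ⟨fun k => x k / (k : ℝ)^4, memA x⟩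

def B (x y : H) : ℝ := ⟪x, A y⟫

def e (n : ℕ+) : H := lp.single 2 n 1

def g (p v w : H) : ℝ := Real.exp (-‖p‖^2) * B v w

def Lg (γ : ℝ → H) : ℝ := ∫ t in (0:ℝ)..1, Real.sqrt (g (γ t) (deriv γ t) (deriv γ t))

def Lstd (γ : ℝ → H) : ℝ := ∫ t in (0:ℝ)..1, ‖deriv γ t‖

def PiecewiseSmooth (γ : ℝ → H) : Prop :=
  ContinuousOn γ (Set.Icc 0 1) ∧
  ∃ s : Finset ℝ, ∀ t ∈ Set.Icc (0:ℝ) 1 \ (s : Set ℝ), ContDiffAt ℝ (⊤ : ℕ∞) γ t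

def dg (p q : H) : ℝ :=
  sInf { l : ℝ | ∃ γ : ℝ → H, PiecewiseSmooth γ ∧ γ 0 = p ∧ γ 1 = q ∧ Lg γ = l }

lemma sq_aux {x m a : ℝ} (h0 : 0 ≤ x) (hm : 0 ≤ m) (ha : 0 ≤ a) (hl : m - a ≤ x) :
    m^2 - 2*m*a ≤ x^2 := by
  rcases le_or_gt m a with h | h
  · nlinarith
  · nlinarith

theorem stmt8 (p q : H) (n : ℕ+) :
    Lg (fun t : ℝ => p + (n : ℝ) • e n + t • (q - p)) ≤
      Real.sqrt (B (q - p) (q - p)) *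
        Real.exp (-(n : ℝ)^2 / 2 + (n : ℝ) * (‖p‖ + ‖q - p‖)) := by
  set v : H := q - p with hv
  set c : H := p + (n : ℝ) • e n with hc
  set C : ℝ := Real.sqrt (B v v) * Real.exp (-(n : ℝ)^2 / 2 + (n : ℝ) * (‖p‖ + ‖v‖)) with hC
  have hderiv : ∀ t : ℝ, deriv (fun t : ℝ => c + t • v) t = v := fun t => by
    have : HasDerivAt (fun t : ℝ => c + t • v) v t := by
      simpa using ((hasDerivAt_id t).smul_const v).const_add c
    exact this.deriv
  have hen : ‖e n‖ = 1 := by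
    have := lp.norm_single (p := 2) (E := fun _ : ℕ+ => ℝ) (by norm_num) n (1:ℝ)
    simpa [e] using this
  -- pointwise bound on the exponent
  have hexp : ∀ t ∈ Set.Icc (0:ℝ) 1,
      -‖c + t • v‖^2 / 2 ≤ -(n : ℝ)^2 / 2 + (n : ℝ) * (‖p‖ + ‖v‖) := by
    intro t ht
    have hlow : (n : ℝ) - (‖p‖ + ‖v‖) ≤ ‖c + t • v‖ := by
      have h1 : ‖(n : ℝ) • e n‖ - ‖p + t • v‖ ≤ ‖(n : ℝ) • e n + (p + t • v)‖ := by
        have := norm_sub_norm_le ((n : ℝ) • e n) (-(p + t • v))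
        rw [sub_neg_eq_add, norm_neg] at this
        linarith
      have h2 : ‖(n : ℝ) • e n‖ = (n : ℝ) := by
        rw [norm_smul, hen]
        simp [abs_of_nonneg (by positivity : (0:ℝ) ≤ (n:ℝ))]
      have h3 : ‖p + t • v‖ ≤ ‖p‖ + ‖v‖ := by
        calc ‖p + t • v‖ ≤ ‖p‖ + ‖t • v‖ := norm_add_le _ _
        _ ≤ ‖p‖ + ‖v‖ := by
            rw [norm_smul, Real.norm_eq_abs]
            have : |t| ≤ 1 := abs_le.mpr ⟨by linarith [ht.1], ht.2⟩
            nlinarith [norm_nonneg v]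
      have hcomm : c + t • v = (n : ℝ) • e n + (p + t • v) := by
        rw [hc]; abel
      rw [hcomm]; linarith
    have hsq : (n : ℝ)^2 - 2 * (n : ℝ) * (‖p‖ + ‖v‖) ≤ ‖c + t • v‖^2 :=
      sq_aux (norm_nonneg _) (by positivity) (by positivity) hlow
    linarith
  -- rewrite the integrand
  have key : (fun t : ℝ => Real.sqrt (g ((fun t : ℝ => c + t • v) t)
      (deriv (fun t : ℝ => c + t • v) t) (deriv (fun t : ℝ => c + t • v) t)))
      = fun t : ℝ => Real.exp (-‖c + t • v‖^2 / 2) * Real.sqrt (B v v) := by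
    funext t
    rw [hderiv t, g, Real.sqrt_mul (Real.exp_nonneg _), ← Real.exp_half]
  have hcont : Continuous fun t : ℝ => Real.exp (-‖c + t • v‖^2 / 2) * Real.sqrt (B v v) := by
    fun_prop
  have hLg : Lg (fun t : ℝ => c + t • v)
      = ∫ t in (0:ℝ)..1, Real.exp (-‖c + t • v‖^2 / 2) * Real.sqrt (B v v) := by
    rw [Lg, key]
  rw [show (fun t : ℝ => p + (n : ℝ) • e n + t • (q - p)) = fun t : ℝ => c + t • v from rfl,
    hLg]
  calc (∫ t in (0:ℝ)..1, Real.exp (-‖c + t • v‖^2 / 2) * Real.sqrt (B v v)) ≤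
      ∫ _ in (0:ℝ)..1, C := by
        apply intervalIntegral.integral_mono_on (by norm_num)
          (hcont.intervalIntegrable 0 1) (intervalIntegrable_const)
        intro t ht
        rw [hC]
        have := Real.exp_le_exp.mpr (hexp t ht)
        have hs : (0:ℝ) ≤ Real.sqrt (B v v) := Real.sqrt_nonneg _
        nlinarith [Real.exp_nonneg (-‖c + t • v‖^2 / 2)]
    _ = C := by simp
    _ = Real.sqrt (B v v) * Real.exp (-(n : ℝ)^2 / 2 + (n : ℝ) * (‖p‖ + ‖v‖)) := rfl
end
end

section
/- For every p ∈ ℓ² and positive integer n, the curve α_n(t) = p + t n e_n, t ∈ [0,1], joining p to p + n e_n, has standard Euclidean (ℓ²) length equal to n, while its g-length satisfies L_g(α_n) ≤ 1/n; hence the ratio L_g(α_n)/L_⟨⟩(α_n) ≤ 1/n² tends to 0. -/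
noncomputable section

open scoped RealInnerProductSpace ENNReal

lemma hasDerivAt_gamma (p : H) (n : ℕ+) (t : ℝ) :
    HasDerivAt (fun t : ℝ => p + (t * (n : ℝ)) • e n) ((n : ℝ) • e n) t := by
  have h : HasDerivAt (fun t : ℝ => (t * (n : ℝ)) • e n) (((1 : ℝ) * (n : ℝ)) • e n) t :=
    ((hasDerivAt_id t).mul_const (n : ℝ)).smul_const (e n)
  simpa using (h.const_add p)

lemma deriv_gamma (p : H) (n : ℕ+) (t : ℝ) :
    deriv (fun t : ℝ => p + (t * (n : ℝ)) • e n) t = (n : ℝ) • e n :=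
  (hasDerivAt_gamma p n t).deriv

lemma norm_e (n : ℕ+) : ‖e n‖ = 1 := by
  simpa [e] using lp.norm_single (E := fun _ : ℕ+ => ℝ) (p := 2) (by norm_num) n (1 : ℝ)

lemma A_smul_e (n : ℕ+) : A ((n : ℝ) • e n) = lp.single 2 n ((n : ℝ) / (n : ℝ)^4) := by
  apply Subtype.ext
  funext k
  show ((n : ℝ) • e n : H) k / (k : ℝ)^4 = _
  rw [lp.coeFn_smul]
  simp only [Pi.smul_apply, smul_eq_mul, e, lp.single_apply]
  by_cases h : k = n
  · subst h; simp
  · simp [h]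

lemma B_val (n : ℕ+) : B ((n : ℝ) • e n) ((n : ℝ) • e n) = (n : ℝ)^2 / (n : ℝ)^4 := by
  rw [B, A_smul_e, lp.inner_single_right]
  have : ((n : ℝ) • e n : H) n = (n : ℝ) := by
    rw [lp.coeFn_smul]
    simp [e, lp.single_apply]
  rw [RCLike.inner_apply]
  simp only [this, starRingEnd_apply, star_trivial]
  ring

theorem stmt18 (p : H) (n : ℕ+) :
    Lstd (fun t : ℝ => p + (t * (n : ℝ)) • e n) = (n : ℝ) ∧
    Lg (fun t : ℝ => p + (t * (n : ℝ)) • e n) ≤ 1 / (n : ℝ) ∧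
    Lg (fun t : ℝ => p + (t * (n : ℝ)) • e n) /
      Lstd (fun t : ℝ => p + (t * (n : ℝ)) • e n) ≤ 1 / (n : ℝ)^2 := by
  have hn : (0 : ℝ) < (n : ℝ) := by exact_mod_cast n.pos
  have hnorm : ‖(n : ℝ) • e n‖ = (n : ℝ) := by
    rw [norm_smul, norm_e]; simp [abs_of_nonneg hn.le]
  have hstd : Lstd (fun t : ℝ => p + (t * (n : ℝ)) • e n) = (n : ℝ) := by
    unfold Lstd
    simp [deriv_gamma, hnorm]
  have hgle : ∀ t : ℝ, Real.sqrt (g (p + (t * (n : ℝ)) • e n) ((n : ℝ) • e n) ((n : ℝ) • e n))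
      ≤ 1 / (n : ℝ) := by
    intro t
    have hg : g (p + (t * (n : ℝ)) • e n) ((n : ℝ) • e n) ((n : ℝ) • e n) ≤ (1 / (n : ℝ))^2 := by
      rw [g, B_val]
      have h1 : Real.exp (-‖p + (t * (n : ℝ)) • e n‖^2) ≤ 1 :=
        Real.exp_le_one_iff.mpr (neg_nonpos.mpr (sq_nonneg _))
      have h2 : (0 : ℝ) ≤ (n : ℝ)^2 / (n : ℝ)^4 := by positivity
      calc Real.exp (-‖p + (t * (n : ℝ)) • e n‖^2) * ((n : ℝ)^2 / (n : ℝ)^4)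
          ≤ 1 * ((n : ℝ)^2 / (n : ℝ)^4) := mul_le_mul_of_nonneg_right h1 h2
        _ = (1 / (n : ℝ))^2 := by field_simp
    calc Real.sqrt (g (p + (t * (n : ℝ)) • e n) ((n : ℝ) • e n) ((n : ℝ) • e n))
        ≤ Real.sqrt ((1 / (n : ℝ))^2) := Real.sqrt_le_sqrt hg
      _ = 1 / (n : ℝ) := Real.sqrt_sq (by positivity)
  have hcont : Continuous (fun t : ℝ =>
      Real.sqrt (g (p + (t * (n : ℝ)) • e n) ((n : ℝ) • e n) ((n : ℝ) • e n))) := by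
    unfold g
    apply Real.continuous_sqrt.comp
    apply Continuous.mul _ continuous_const
    fun_prop
  have hLg : Lg (fun t : ℝ => p + (t * (n : ℝ)) • e n) ≤ 1 / (n : ℝ) := by
    unfold Lg
    simp only [deriv_gamma]
    calc (∫ t in (0:ℝ)..1,
          Real.sqrt (g (p + (t * (n : ℝ)) • e n) ((n : ℝ) • e n) ((n : ℝ) • e n)))
        ≤ ∫ _ in (0:ℝ)..1, 1 / (n : ℝ) := by
          apply intervalIntegral.integral_mono_on (by norm_num)
          · exact (hcont.intervalIntegrable 0 1)
          · exact intervalIntegrable_const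
          · intro t _; exact hgle t
      _ = 1 / (n : ℝ) := by simp
  refine ⟨hstd, hLg, ?_⟩
  rw [hstd]
  calc Lg (fun t : ℝ => p + (t * (n : ℝ)) • e n) / (n : ℝ)
      ≤ (1 / (n : ℝ)) / (n : ℝ) := by
        gcongr
    _ = 1 / (n : ℝ)^2 := by field_simp
end
end

section
/- The infimum defining d_g is unchanged if restricted to concatenations of three affine segments: for all p, q ∈ ℓ², inf over n of [L_g(α_n) + L_g(β_n) + L_g(δ_n)] = 0, where α_n(t) = p + t n e_n, β_n(t) = p + n e_n + t(q−p), δ_n(t) = q + (1−t) n e_n. -/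
noncomputable section

open scoped RealInnerProductSpace ENNReal

lemma A_apply (x : H) (k : ℕ+) : A x k = x k / (k:ℝ)^4 := rfl

lemma A_smul (c : ℝ) (x : H) : A (c • x) = c • A x := by
  apply Subtype.ext
  funext k
  rw [lp.coeFn_smul, Pi.smul_apply]
  show (c • x) k / (k:ℝ)^4 = c • (A x k)
  rw [lp.coeFn_smul, Pi.smul_apply, A_apply]
  simp [smul_eq_mul, mul_div_assoc]

lemma A_e (n : ℕ+) : A (e n) = ((n:ℝ)^4)⁻¹ • e n := by
  apply Subtype.ext
  funext k
  rw [lp.coeFn_smul, Pi.smul_apply]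
  show e n k / (k:ℝ)^4 = _
  rcases eq_or_ne k n with h | h
  · subst h; rw [show e k k = 1 from lp.single_apply_self 2 k 1]
    simp
  · rw [show e n k = 0 from lp.single_apply_ne 2 n 1 h]
    simp

lemma inner_e (n : ℕ+) : (⟪e n, e n⟫ : ℝ) = 1 := by
  rw [show (⟪e n, e n⟫:ℝ) = _ from lp.inner_single_left n 1 (e n)]
  simp [e, lp.single_apply_self]

lemma B_smul_e (n : ℕ+) (a b : ℝ) : B (a • e n) (b • e n) = a * b / (n:ℝ)^4 := by
  unfold B
  rw [A_smul, A_e, real_inner_smul_left, real_inner_smul_right, real_inner_smul_right, inner_e]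
  ring

lemma B_nonneg (v : H) : 0 ≤ B v v := by
  unfold B
  rw [lp.inner_eq_tsum]
  refine tsum_nonneg fun k => ?_
  rw [A_apply, RCLike.inner_apply]
  simp only [starRingEnd_apply, star_trivial]
  have : v k / (k:ℝ)^4 * v k = (v k)^2 / (k:ℝ)^4 := by ring
  rw [this]; positivity

lemma deriv_alpha (p : H) (n : ℕ+) (t : ℝ) :
    deriv (fun t : ℝ => p + (t * (n : ℝ)) • e n) t = (n:ℝ) • e n := by
  have h : HasDerivAt (fun t : ℝ => p + (t * (n : ℝ)) • e n) (((1:ℝ) * n) • e n) t :=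
    (((hasDerivAt_id t).mul_const (n:ℝ)).smul_const (e n)).const_add p
  rw [h.deriv, one_mul]

lemma deriv_beta (p q : H) (n : ℕ+) (t : ℝ) :
    deriv (fun t : ℝ => p + (n : ℝ) • e n + t • (q - p)) t = q - p := by
  have h : HasDerivAt (fun t : ℝ => p + (n : ℝ) • e n + t • (q - p)) ((1:ℝ) • (q - p)) t :=
    ((hasDerivAt_id t).smul_const (q - p)).const_add _
  rw [h.deriv, one_smul]

lemma deriv_delta (q : H) (n : ℕ+) (t : ℝ) :
    deriv (fun t : ℝ => q + ((1 - t) * (n : ℝ)) • e n) t = (-(n:ℝ)) • e n := by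
  have h : HasDerivAt (fun t : ℝ => q + ((1 - t) * (n : ℝ)) • e n)
      (((0 - 1 : ℝ) * n) • e n) t :=
    ((((hasDerivAt_const t (1:ℝ)).sub (hasDerivAt_id t)).mul_const (n:ℝ)).smul_const (e n)).const_add q
  rw [h.deriv]; norm_num

lemma sqrt_g_le_sqrt_B (p' v : H) : Real.sqrt (g p' v v) ≤ Real.sqrt (B v v) := by
  apply Real.sqrt_le_sqrt
  exact mul_le_of_le_one_left (B_nonneg v) (Real.exp_le_one_iff.2 (neg_nonpos.2 (sq_nonneg _)))

lemma sqrt_g_le_of_norm_ge (p' v : H) {r : ℝ} (hr : 0 < r) (h : r ≤ ‖p'‖) :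
    Real.sqrt (g p' v v) ≤ Real.sqrt (B v v) / r := by
  have h1 : Real.exp (-‖p'‖^2) ≤ (r^2)⁻¹ := by
    have e1 : Real.exp (-‖p'‖^2) ≤ Real.exp (-r^2) := by
      apply Real.exp_le_exp.2; nlinarith
    have e2 : Real.exp (-r^2) ≤ (r^2)⁻¹ := by
      rw [Real.exp_neg]
      refine inv_anti₀ (by positivity) ?_
      nlinarith [Real.add_one_le_exp (r^2)]
    linarith
  have h2 : g p' v v ≤ (r^2)⁻¹ * B v v :=
    mul_le_mul_of_nonneg_right h1 (B_nonneg v)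
  calc Real.sqrt (g p' v v) ≤ Real.sqrt ((r^2)⁻¹ * B v v) := Real.sqrt_le_sqrt h2
    _ = Real.sqrt (B v v) / r := by
        rw [Real.sqrt_mul (by positivity), Real.sqrt_inv, Real.sqrt_sq hr.le]
        ring

lemma Lg_nonneg (γ : ℝ → H) : 0 ≤ Lg γ :=
  intervalIntegral.integral_nonneg (by norm_num) (fun t _ => Real.sqrt_nonneg _)

lemma Lg_le (γ : ℝ → H) {C : ℝ} (hC : 0 ≤ C)
    (h : ∀ t ∈ Set.uIoc (0:ℝ) 1, Real.sqrt (g (γ t) (deriv γ t) (deriv γ t)) ≤ C) :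
    Lg γ ≤ C := by
  have := intervalIntegral.norm_integral_le_of_norm_le_const (a := (0:ℝ)) (b := 1) (C := C)
    (f := fun t => Real.sqrt (g (γ t) (deriv γ t) (deriv γ t)))
    (fun t ht => by rw [Real.norm_eq_abs, abs_of_nonneg (Real.sqrt_nonneg _)]; exact h t ht)
  have h2 : Lg γ ≤ |Lg γ| := le_abs_self _
  unfold Lg
  calc _ ≤ |∫ t in (0:ℝ)..1, Real.sqrt (g (γ t) (deriv γ t) (deriv γ t))| := le_abs_self _
    _ ≤ C * |1 - 0| := this
    _ = C := by norm_num

theorem stmt19 (p q : H) :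
    ⨅ n : ℕ+,
      (Lg (fun t : ℝ => p + (t * (n : ℝ)) • e n) +
       Lg (fun t : ℝ => p + (n : ℝ) • e n + t • (q - p)) +
       Lg (fun t : ℝ => q + ((1 - t) * (n : ℝ)) • e n)) = 0 := by
  set f : ℕ+ → ℝ := fun n =>
      (Lg (fun t : ℝ => p + (t * (n : ℝ)) • e n) +
       Lg (fun t : ℝ => p + (n : ℝ) • e n + t • (q - p)) +
       Lg (fun t : ℝ => q + ((1 - t) * (n : ℝ)) • e n)) with hf
  have hnn : ∀ n, 0 ≤ f n := fun n => by
    have := Lg_nonneg (fun t : ℝ => p + (t * (n : ℝ)) • e n)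
    have := Lg_nonneg (fun t : ℝ => p + (n : ℝ) • e n + t • (q - p))
    have := Lg_nonneg (fun t : ℝ => q + ((1 - t) * (n : ℝ)) • e n)
    simp only [hf]; linarith
  have hbdd : BddBelow (Set.range f) := ⟨0, by rintro x ⟨n, rfl⟩; exact hnn n⟩
  refine le_antisymm ?_ (le_ciInf hnn)
  have key : ∀ ε > (0:ℝ), ∃ n : ℕ+, f n ≤ ε := by
    intro ε hε
    set c0 : ℝ := ‖p‖ + ‖q - p‖ with hc0
    set C : ℝ := Real.sqrt (B (q - p) (q - p)) with hC
    have hCnn : 0 ≤ C := Real.sqrt_nonneg _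
    obtain ⟨m, hm⟩ := exists_nat_gt (max (3/ε) (c0 + 3*(C+1)/ε))
    refine ⟨⟨m + 1, m.succ_pos⟩, ?_⟩
    set n : ℕ+ := ⟨m + 1, m.succ_pos⟩ with hn
    have hnR : max (3/ε) (c0 + 3*(C+1)/ε) < (n:ℝ) := by
      refine lt_of_lt_of_le hm ?_
      have : ((n:ℕ):ℝ) = (m:ℝ) + 1 := by norm_cast
      rw [this]; linarith
    have hn1 : 3/ε < (n:ℝ) := lt_of_le_of_lt (le_max_left _ _) hnR
    have hn2 : c0 + 3*(C+1)/ε < (n:ℝ) := lt_of_le_of_lt (le_max_right _ _) hnR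
    have npos : (0:ℝ) < n := by positivity
    have hinv : 1/(n:ℝ) ≤ ε/3 := by
      rw [div_le_div_iff₀ npos (by norm_num)]
      have h3 : 3 < (n:ℝ) * ε := (div_lt_iff₀ hε).1 hn1
      linarith
    -- the α and δ bounds
    have sqrtB : Real.sqrt ((n:ℝ) * n / (n:ℝ)^4) = 1/(n:ℝ) := by
      rw [show (n:ℝ)*(n:ℝ)/(n:ℝ)^4 = (1/(n:ℝ))^2 by field_simp]
      exact Real.sqrt_sq (by positivity)
    have hα : Lg (fun t : ℝ => p + (t * (n : ℝ)) • e n) ≤ 1/(n:ℝ) := by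
      refine Lg_le _ (by positivity) fun t ht => ?_
      rw [deriv_alpha]
      calc Real.sqrt (g _ ((n:ℝ) • e n) ((n:ℝ) • e n))
          ≤ Real.sqrt (B ((n:ℝ) • e n) ((n:ℝ) • e n)) := sqrt_g_le_sqrt_B _ _
        _ = 1/(n:ℝ) := by rw [B_smul_e, sqrtB]
    have hδ : Lg (fun t : ℝ => q + ((1 - t) * (n : ℝ)) • e n) ≤ 1/(n:ℝ) := by
      refine Lg_le _ (by positivity) fun t ht => ?_
      rw [deriv_delta]
      calc Real.sqrt (g _ ((-(n:ℝ)) • e n) ((-(n:ℝ)) • e n))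
          ≤ Real.sqrt (B ((-(n:ℝ)) • e n) ((-(n:ℝ)) • e n)) := sqrt_g_le_sqrt_B _ _
        _ = 1/(n:ℝ) := by
            rw [B_smul_e, show (-(n:ℝ))*(-(n:ℝ)) = (n:ℝ)*(n:ℝ) by ring, sqrtB]
    -- the β bound
    have hrpos : 0 < (n:ℝ) - c0 := by
      have : 0 < 3*(C+1)/ε := by positivity
      linarith
    have hβ : Lg (fun t : ℝ => p + (n : ℝ) • e n + t • (q - p)) ≤ C / ((n:ℝ) - c0) := by
      refine Lg_le _ (by positivity) fun t ht => ?_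
      rw [deriv_beta]
      refine sqrt_g_le_of_norm_ge _ _ hrpos ?_
      rw [Set.uIoc_of_le zero_le_one] at ht
      have habs : |t| ≤ 1 := abs_le.2 ⟨by linarith [ht.1], ht.2⟩
      have h1 : ‖(n:ℝ) • e n‖ = (n:ℝ) := by
        rw [norm_smul, norm_e, Real.norm_eq_abs, abs_of_pos npos, mul_one]
      have h2 : ‖t • (q - p)‖ ≤ ‖q - p‖ := by
        rw [norm_smul, Real.norm_eq_abs]
        exact mul_le_of_le_one_left (norm_nonneg _) habs
      set X : H := p + (n:ℝ) • e n + t • (q - p) with hX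
      have h3 : ‖(n:ℝ) • e n‖ ≤ ‖X‖ + ‖p‖ + ‖t • (q - p)‖ := by
        have hEq : (n:ℝ) • e n = X - p - t • (q - p) := by rw [hX]; abel
        rw [hEq]
        calc ‖X - p - t • (q - p)‖ ≤ ‖X - p‖ + ‖t • (q - p)‖ := norm_sub_le _ _
          _ ≤ ‖X‖ + ‖p‖ + ‖t • (q - p)‖ := by linarith [norm_sub_le X p]
      rw [h1] at h3
      simp only [hc0]
      linarith
    have hβ2 : C / ((n:ℝ) - c0) ≤ ε/3 := by
      have step : C / ((n:ℝ) - c0) ≤ C / (3*(C+1)/ε) := by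
        apply div_le_div_of_nonneg_left hCnn (by positivity)
        linarith
      have step2 : C / (3*(C+1)/ε) ≤ ε/3 := by
        rw [div_le_div_iff₀ (by positivity) (by norm_num)]
        have hne : (ε:ℝ) ≠ 0 := ne_of_gt hε
        have : ε * (3*(C+1)/ε) = 3*(C+1) := by field_simp
        rw [this]; linarith
      linarith
    have : f n ≤ ε/3 + ε/3 + ε/3 := by
      simp only [hf]
      have := hα; have := hδ
      have h1 : Lg (fun t : ℝ => p + (t * (n : ℝ)) • e n) ≤ ε/3 := le_trans hα hinv
      have h2 : Lg (fun t : ℝ => q + ((1 - t) * (n : ℝ)) • e n) ≤ ε/3 := le_trans hδ hinv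
      have h3 : Lg (fun t : ℝ => p + (n : ℝ) • e n + t • (q - p)) ≤ ε/3 := le_trans hβ hβ2
      linarith
    calc f n ≤ ε/3 + ε/3 + ε/3 := this
      _ = ε := by ring
  refine le_of_forall_pos_le_add fun ε hε => ?_
  obtain ⟨n, hn⟩ := key ε hε
  calc ⨅ n, f n ≤ f n := ciInf_le hbdd n
    _ ≤ ε := hn
    _ = 0 + ε := by ring
end
end
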